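/- Let S be a grope frame, m ≤ n, and let X, Y ∈ W(E_n) be words such that both XY and YX are reduced words. If XY ∈ F_m and YX ∈ F_m, then X ∈ F_m and Y ∈ F_m. -/

import Mathlib

/-! Basic definitions for grope groups, following Cencelj–Eda–Vavpetič,
"Rigidity of the minimal grope group". -/

/-- A *grope frame* is a set `S` of finite sequences of natural numbers containing the
empty sequence and such that for every `s ∈ S` there is `n > 0` with
`{i | s ++ [i] ∈ S} = {0, …, 2n - 1}`. -/
structure GropeFrame where
  S : Set (List ℕ)
  nil_mem : [] ∈ S
  branch : ∀ s ∈ S, ∃ n : ℕ, 0 < n ∧ {i : ℕ | s ++ [i] ∈ S} = Set.Iio (2 * n)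

namespace GropeFrame

/-- The number of children of a sequence `s` in the frame. -/
noncomputable def deg (G : GropeFrame) (s : List ℕ) : ℕ :=
  sInf {i : ℕ | s ++ [i] ∉ G.S}

theorem deg_eq (G : GropeFrame) {s : List ℕ} {n : ℕ}
    (hn : {i : ℕ | s ++ [i] ∈ G.S} = Set.Iio (2 * n)) : G.deg s = 2 * n := by
  have hc : {i : ℕ | s ++ [i] ∉ G.S} = Set.Ici (2 * n) := by
    ext i
    have h := Set.ext_iff.1 hn i
    simp only [Set.mem_setOf_eq, Set.mem_Iio] at h
    simp [Set.mem_Ici, h, not_lt]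
  rw [deg, hc, csInf_Ici]

theorem mem_of_lt_deg (G : GropeFrame) {s : List ℕ} (hs : s ∈ G.S) {i : ℕ}
    (hi : i < G.deg s) : s ++ [i] ∈ G.S := by
  obtain ⟨n, -, hn⟩ := G.branch s hs
  rw [G.deg_eq hn] at hi
  exact (Set.ext_iff.1 hn i).2 hi

/-- `s` is binary branched in the frame `G` if its set of children indices is `{0, 1}`. -/
def BinaryBranched (G : GropeFrame) (s : List ℕ) : Prop :=
  {i : ℕ | s ++ [i] ∈ G.S} = {0, 1}

end GropeFrame

/-- The set `E_m` of free generators `c_s`, `s ∈ S`, `lh s = m`, of the free group `F_m`. -/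
abbrev GropeGen (G : GropeFrame) (m : ℕ) : Type :=
  {s : List ℕ // s ∈ G.S ∧ s.length = m}

/-- The generator `c_{s i}` obtained by appending `i` to `s`. -/
def gropeChild {G : GropeFrame} {m : ℕ} (x : GropeGen G m) (i : ℕ)
    (hi : i < G.deg x.1) : GropeGen G (m + 1) :=
  ⟨x.1 ++ [i], ⟨G.mem_of_lt_deg x.2.1 hi, by simp [x.2.2]⟩⟩

open scoped commutatorElement

/-- The bonding homomorphism `e_m : F_m → F_{m+1}`, sending `c_s` to
`[c_{s0}, c_{s1}] ⋯ [c_{s(2k-2)}, c_{s(2k-1)}]`. -/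
noncomputable def gropeE (G : GropeFrame) (m : ℕ) :
    FreeGroup (GropeGen G m) →* FreeGroup (GropeGen G (m + 1)) :=
  FreeGroup.lift fun x =>
    (List.ofFn fun j : Fin (G.deg x.1 / 2) =>
      ⁅FreeGroup.of (gropeChild x (2 * (j : ℕ)) (by have := j.isLt; omega)),
        FreeGroup.of (gropeChild x (2 * (j : ℕ) + 1) (by have := j.isLt; omega))⁆).prod

/-- The composite `e_{m,n} = e_{n-1} ∘ ⋯ ∘ e_m : F_m → F_n`. -/
noncomputable def gropeEle (G : GropeFrame) {m n : ℕ} (h : m ≤ n)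
    (x : FreeGroup (GropeGen G m)) : FreeGroup (GropeGen G n) :=
  Nat.leRecOn (C := fun k => FreeGroup (GropeGen G k)) h
    (fun {k} y => gropeE G k y) x

/-- For `v ∈ F_n`, `MemF G m v` says that `v` lies in (the image of) `F_m`,
i.e. in the image of `e_{m,n}`. -/
def MemF (G : GropeFrame) (m : ℕ) {n : ℕ} (v : FreeGroup (GropeGen G n)) : Prop :=
  ∃ (h : m ≤ n) (x : FreeGroup (GropeGen G m)), gropeEle G h x = v

/-- The formal inverse `W⁻` of a word. -/
def wordInv {α : Type*} (w : List (α × Bool)) : List (α × Bool) :=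
  (w.map fun p => (p.1, !p.2)).reverse

/-- A word is reduced if no letter is adjacent to its formal inverse. -/
def IsReducedWord {α : Type*} (w : List (α × Bool)) : Prop :=
  w.Chain' fun a b => ¬(a.1 = b.1 ∧ b.2 = !a.2)

/-- A word is cyclically reduced if it is reduced and moreover its first and last letters
are not mutually inverse. -/
def IsCyclicallyReducedWord {α : Type*} (w : List (α × Bool)) : Prop :=
  IsReducedWord w ∧ ∀ a b : α × Bool, w.getLast? = some a → w.head? = some b →
    ¬(a.1 = b.1 ∧ b.2 = !a.2)

/-- Expansion of a single letter: `c_t` is replaced by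
`c_{t0} c_{t1} c_{t0}⁻ c_{t1}⁻ ⋯ c_{t(2k-2)} c_{t(2k-1)} c_{t(2k-2)}⁻ c_{t(2k-1)}⁻` and
`c_t⁻` by the formal inverse of this word. -/
noncomputable def letterExp (G : GropeFrame) {m : ℕ} (a : GropeGen G m × Bool) :
    List (GropeGen G (m + 1) × Bool) :=
  let P : List (GropeGen G (m + 1) × Bool) :=
    (List.ofFn fun j : Fin (G.deg a.1.1 / 2) =>
      [(gropeChild a.1 (2 * (j : ℕ)) (by have := j.isLt; omega), true),
       (gropeChild a.1 (2 * (j : ℕ) + 1) (by have := j.isLt; omega), true),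
       (gropeChild a.1 (2 * (j : ℕ)) (by have := j.isLt; omega), false),
       (gropeChild a.1 (2 * (j : ℕ) + 1) (by have := j.isLt; omega), false)]).flatten
  if a.2 then P else wordInv P

/-- The word `e_{m,n}[W]` obtained from `W ∈ W(E_m)` by iterated letter expansion. -/
noncomputable def wordExp (G : GropeFrame) {m n : ℕ} (h : m ≤ n)
    (w : List (GropeGen G m × Bool)) : List (GropeGen G n × Bool) :=
  Nat.leRecOn (C := fun k => List (GropeGen G k × Bool)) h
    (fun {k} v => (v.map (letterExp G)).flatten) w

/-- `IsSmall G hmn W V` : the subword `V` of the reduced word `W ∈ W(E_n)` (where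
`W ∈ F_m`, with `W ≡ e_{m,n}[W₀]`) is *small*, i.e. there are a letter `c` occurring in
`W₀` and `i ∈ ℕ` such that `V` is a subword of `e_{m+1,n}[c_{si}]` (resp. of
`e_{m+1,n}[c_{si}⁻]` when the occurring letter is negative). -/
def IsSmall (G : GropeFrame) {m n : ℕ} (hmn : m < n)
    (W V : List (GropeGen G n × Bool)) : Prop :=
  ∃ W₀ : List (GropeGen G m × Bool), wordExp G hmn.le W₀ = W ∧
    ∃ c ∈ W₀, ∃ (i : ℕ) (hi : i < G.deg c.1.1),
      V <:+: wordExp G (Nat.succ_le_of_lt hmn) [(gropeChild c.1 i hi, c.2)]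

/-!
Expanding a letter `c_s^{±1}` one level replaces it by a product of commutator words
`u v u⁻ v⁻` of children of `s`. These words form a self-synchronising code: the sign pattern
`++--` fixes where the blocks of four letters start, and the first block of an expansion is
recognised by its child indices (`0, 1` for `c_s`, `2k-1, 2k-2` for `c_s⁻`). Hence whenever
`XY` and `YX` are both expansions, the cut between `X` and `Y` falls between expanded letters,
and `X`, `Y` are themselves expansions. Since expansions of reduced words are reduced, a
reduced word lying in `F_m` is literally the iterated expansion of a word over `E_m`, and the
cut can be pulled back one level at a time.
-/

section Codes

variable {α β : Type*}

def IsPrefixCode (f : α → List β) : Prop :=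
  (∀ a, f a ≠ []) ∧ ∀ a b r s, f a ++ r = f b ++ s → a = b

def IsOverlapFree (f : α → List β) : Prop :=
  ∀ a b U V r s, f a = U ++ V → U ≠ [] → V ≠ [] → V ++ r ≠ f b ++ s

theorem IsPrefixCode.flatMap_injective {f : α → List β} (hf : IsPrefixCode f) :
    Function.Injective (List.flatMap f) := by
  intro A
  induction A with
  | nil =>
    rintro (_ | ⟨b, B⟩) h
    · rfl
    · exact absurd (List.append_eq_nil_iff.1 h.symm).1 (hf.1 b)
  | cons a A ih =>
    rintro (_ | ⟨b, B⟩) h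
    · exact absurd (List.append_eq_nil_iff.1 h).1 (hf.1 a)
    · simp only [List.flatMap_cons] at h
      obtain rfl := hf.2 a b _ _ h
      rw [ih (List.append_cancel_left h)]

theorem IsOverlapFree.exists_split {f : α → List β} (hf : IsOverlapFree f) {A B : List α}
    {X Y : List β} (hA : A.flatMap f = X ++ Y) (hB : B.flatMap f = Y ++ X) :
    ∃ A₁ A₂, A = A₁ ++ A₂ ∧ A₁.flatMap f = X ∧ A₂.flatMap f = Y := by
  rw [List.flatMap_def, List.flatten_eq_append_iff] at hA
  rcases hA with ⟨L₁, L₂, hL, rfl, rfl⟩ | ⟨L₁, U, c, V, L₂, hL, rfl, rfl⟩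
  · obtain ⟨A₁, A₂, rfl, rfl, rfl⟩ := List.map_eq_append_iff.1 hL
    exact ⟨A₁, A₂, rfl, rfl, rfl⟩
  obtain ⟨A₁, A₂', rfl, rfl, hA₂'⟩ := List.map_eq_append_iff.1 hL
  obtain ⟨a, A₂, rfl, ha, rfl⟩ := List.map_eq_cons_iff.1 hA₂'
  rcases eq_or_ne U [] with rfl | hU
  · exact ⟨A₁, a :: A₂, rfl, by simp [List.flatMap_def], by simp [List.flatMap_def, ha]⟩
  obtain ⟨b, B, rfl⟩ := List.exists_cons_of_ne_nil (l := B) (by rintro rfl; simp at hB)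
  exact (hf a b U (c :: V) _ (B.flatMap f) ha hU (List.cons_ne_nil _ _)
    (by simpa [List.flatMap_def] using hB.symm)).elim

theorem IsOverlapFree.exists_split_of_isPrefixCode {f : α → List β} (hf : IsOverlapFree f)
    (hf' : IsPrefixCode f) {A B : List α} {X Y : List β} (hA : A.flatMap f = X ++ Y)
    (hB : B.flatMap f = Y ++ X) :
    ∃ A₁ A₂, A = A₁ ++ A₂ ∧ B = A₂ ++ A₁ ∧ A₁.flatMap f = X ∧ A₂.flatMap f = Y := by
  obtain ⟨A₁, A₂, rfl, rfl, rfl⟩ := hf.exists_split hA hB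
  exact ⟨A₁, A₂, rfl, hf'.flatMap_injective (by simpa using hB), rfl, rfl⟩

def commutatorWord (p : α × α) : List (α × Bool) :=
  [(p.1, true), (p.2, true), (p.1, false), (p.2, false)]

theorem isPrefixCode_commutatorWord : IsPrefixCode (commutatorWord (α := α)) := by
  refine ⟨fun _ => List.cons_ne_nil _ _, fun a b r s h => ?_⟩
  simp only [commutatorWord, List.cons_append, List.cons.injEq, Prod.mk.injEq] at h
  exact Prod.ext h.1.1 h.2.1.1

theorem isOverlapFree_commutatorWord : IsOverlapFree (commutatorWord (α := α)) := by
  rintro a b U V r s hUV hU hV h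
  rcases U with _ | ⟨x, _ | ⟨y, _ | ⟨z, _ | ⟨w, U⟩⟩⟩⟩ <;>
    simp only [commutatorWord, List.cons_append, List.nil_append, List.cons.injEq] at hUV <;>
    grind [commutatorWord, List.append_eq_nil_iff]

theorem List.IsChain.flatMap {S : α → α → Prop} {R : β → β → Prop} {f : α → List β}
    {A : List α} (hf : ∀ a, f a ≠ []) (hR : ∀ a b, S a b → ∀ x ∈ f a, ∀ y ∈ f b, R x y)
    (hfR : ∀ a, (f a).IsChain R) (hA : A.IsChain S) : (A.flatMap f).IsChain R := by
  rw [List.flatMap_def, List.isChain_flatten (by simpa using fun a _ => (hf a).symm),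
    List.isChain_map]
  refine ⟨by simpa using fun a _ => hfR a, hA.imp fun a b hab x hx y hy => ?_⟩
  exact hR a b hab x (List.mem_of_getLast? hx) y (List.mem_of_head? hy)

theorem isReduced_flatMap_commutatorWord {L : List (α × α)} (hne : ∀ p ∈ L, p.1 ≠ p.2)
    (hL : L.IsChain fun p q => p.2 ≠ q.1) : FreeGroup.IsReduced (L.flatMap commutatorWord) := by
  induction L with
  | nil => exact FreeGroup.IsReduced.nil
  | cons p L ih =>
    rw [List.flatMap_cons, FreeGroup.IsReduced, List.isChain_append]
    refine ⟨?_, ih (fun q hq => hne q (.tail p hq)) hL.tail, ?_⟩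
    · have := hne p (.head L)
      simp [commutatorWord, Ne.symm this]
    · rcases L with _ | ⟨q, L⟩
      · simp
      · have := List.rel_of_isChain_cons_cons hL
        simp [commutatorWord, this]

theorem commutatorElement_of_of (x y : α) :
    ⁅FreeGroup.of x, FreeGroup.of y⁆ = FreeGroup.mk (commutatorWord (x, y)) := by
  simp [commutatorElement_def, FreeGroup.of, FreeGroup.inv_mk, FreeGroup.mul_mk,
    FreeGroup.invRev, commutatorWord]

theorem prod_map_commutatorElement (L : List (α × α)) :
    (L.map fun p => ⁅FreeGroup.of p.1, FreeGroup.of p.2⁆).prod =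
      FreeGroup.mk (L.flatMap commutatorWord) := by
  induction L with
  | nil => rfl
  | cons p L ih =>
    rw [List.map_cons, List.prod_cons, ih, commutatorElement_of_of, FreeGroup.mul_mk]; rfl

theorem invRev_flatMap_commutatorWord (L : List (α × α)) :
    FreeGroup.invRev (L.flatMap commutatorWord) =
      (L.map Prod.swap).reverse.flatMap commutatorWord := by
  induction L with
  | nil => rfl
  | cons p L ih =>
    rw [List.flatMap_cons, FreeGroup.invRev_append, ih]
    simp [commutatorWord, FreeGroup.invRev]

theorem List.reverse_ofFn {n : ℕ} (f : Fin n → α) :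
    (List.ofFn f).reverse = List.ofFn (f ∘ Fin.rev) := by
  rw [List.ofFn_eq_map, ← List.map_reverse, List.finRange_reverse, List.map_map,
    List.ofFn_eq_map]

theorem List.exists_eq_of_ofFn_eq_append_cons {n : ℕ} {f : Fin n → α} {P Q : List α} {q : α}
    (h : List.ofFn f = P ++ q :: Q) : ∃ hP : P.length < n, f ⟨P.length, hP⟩ = q := by
  have := congrArg (·[P.length]?) h
  simpa using this

theorem FreeGroup.prod_map_mk (L : List (List (α × Bool))) :
    (L.map FreeGroup.mk).prod = FreeGroup.mk L.flatten := by
  induction L with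
  | nil => exact FreeGroup.one_eq_mk
  | cons w L ih => rw [List.map_cons, List.prod_cons, ih, FreeGroup.mul_mk, List.flatten_cons]

theorem FreeGroup.IsReduced.eq_of_mk_eq [DecidableEq α] {L₁ L₂ : List (α × Bool)}
    (h₁ : FreeGroup.IsReduced L₁) (h₂ : FreeGroup.IsReduced L₂)
    (h : FreeGroup.mk L₁ = FreeGroup.mk L₂) : L₁ = L₂ := by
  rw [← h₁.reduce_eq, ← h₂.reduce_eq, ← FreeGroup.toWord_mk, h, FreeGroup.toWord_mk]

theorem isReducedWord_iff_isReduced {L : List (α × Bool)} :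
    IsReducedWord L ↔ FreeGroup.IsReduced L := by
  unfold IsReducedWord FreeGroup.IsReduced
  congr! 3 with a b
  cases a.2 <;> cases b.2 <;> simp

end Codes

theorem GropeFrame.exists_deg_eq_two_mul (G : GropeFrame) {s : List ℕ} (hs : s ∈ G.S) :
    ∃ k, 0 < k ∧ G.deg s = 2 * k := by
  obtain ⟨k, hk, hS⟩ := G.branch s hs
  exact ⟨k, hk, G.deg_eq hS⟩

section Grope

variable {G : GropeFrame} {m : ℕ}

theorem eq_of_gropeChild_eq {c d : GropeGen G m} {i j : ℕ} {hi : i < G.deg c.1}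
    {hj : j < G.deg d.1} (h : gropeChild c i hi = gropeChild d j hj) : c = d ∧ i = j := by
  obtain ⟨hcd, hij⟩ := List.append_inj (congrArg Subtype.val h) (by rw [c.2.2, d.2.2])
  exact ⟨Subtype.ext hcd, List.singleton_inj.1 hij⟩

noncomputable def letterBlock (a : GropeGen G m × Bool) (j : Fin (G.deg a.1.1 / 2)) :
    GropeGen G (m + 1) × GropeGen G (m + 1) :=
  if a.2 then
    (gropeChild a.1 (2 * j) (by omega), gropeChild a.1 (2 * j + 1) (by omega))
  else
    (gropeChild a.1 (2 * j.rev + 1) (by omega), gropeChild a.1 (2 * j.rev) (by omega))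

noncomputable def letterBlocks (a : GropeGen G m × Bool) :
    List (GropeGen G (m + 1) × GropeGen G (m + 1)) :=
  List.ofFn (letterBlock a)

theorem letterExp_eq_flatMap (a : GropeGen G m × Bool) :
    letterExp G a = (letterBlocks a).flatMap commutatorWord := by
  have hpos (c : GropeGen G m) :
      letterExp G (c, true) = (letterBlocks (c, true)).flatMap commutatorWord := by
    rw [letterBlocks, List.flatMap_def, List.map_ofFn]
    rfl
  rcases a with ⟨c, _ | _⟩
  · change FreeGroup.invRev (letterExp G (c, true)) = _
    rw [hpos, invRev_flatMap_commutatorWord, letterBlocks, List.map_ofFn, List.reverse_ofFn]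
    rfl
  · exact hpos c

theorem letterBlock_fst_ne_snd (a : GropeGen G m × Bool) (j : Fin (G.deg a.1.1 / 2)) :
    (letterBlock a j).1 ≠ (letterBlock a j).2 := by
  intro h
  rcases a with ⟨c, _ | _⟩ <;> simp only [letterBlock, Bool.false_eq_true, ↓reduceIte] at h <;>
    · obtain ⟨-, hij⟩ := eq_of_gropeChild_eq h
      omega

theorem letterBlock_snd_eq_fst {a b : GropeGen G m × Bool} {j : Fin (G.deg a.1.1 / 2)}
    {j' : Fin (G.deg b.1.1 / 2)} (h : (letterBlock a j).2 = (letterBlock b j').1) :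
    a.1 = b.1 ∧ b.2 = !a.2 := by
  rcases a with ⟨c, _ | _⟩ <;> rcases b with ⟨d, _ | _⟩ <;>
    simp only [letterBlock, Bool.false_eq_true, ↓reduceIte] at h <;>
    · obtain ⟨rfl, hij⟩ := eq_of_gropeChild_eq h
      exact ⟨rfl, by first | rfl | omega⟩

/-- The first child index of a block is even exactly for positive letters, and it is `0` or
`deg - 1` only in the first block. -/
theorem letterBlock_fst_eq_fst_zero {a b : GropeGen G m × Bool} {j : Fin (G.deg a.1.1 / 2)}
    (hb : 0 < G.deg b.1.1 / 2) (h : (letterBlock a j).1 = (letterBlock b ⟨0, hb⟩).1) :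
    a = b ∧ (j : ℕ) = 0 := by
  rcases a with ⟨c, _ | _⟩ <;> rcases b with ⟨d, _ | _⟩ <;>
    simp only [letterBlock, Bool.false_eq_true, ↓reduceIte] at h <;>
    · obtain ⟨rfl, hij⟩ := eq_of_gropeChild_eq h
      obtain ⟨k, -, hk⟩ := G.exists_deg_eq_two_mul c.2.1
      have hj := Fin.val_rev j
      have h0 := Fin.val_rev (⟨0, hb⟩ : Fin (G.deg c.1 / 2))
      dsimp only at hj h0 hij ⊢
      first | exact ⟨rfl, by omega⟩ | omega

theorem letterBlocks_ne_nil (a : GropeGen G m × Bool) : letterBlocks a ≠ [] := by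
  obtain ⟨k, hk, hdeg⟩ := G.exists_deg_eq_two_mul a.1.2.1
  rw [letterBlocks, Ne, List.ofFn_eq_nil_iff]
  omega

theorem isPrefixCode_letterBlocks : IsPrefixCode (letterBlocks (G := G) (m := m)) := by
  refine ⟨letterBlocks_ne_nil, fun a b r s h => ?_⟩
  obtain ⟨p, P, hp⟩ := List.exists_cons_of_ne_nil (letterBlocks_ne_nil a)
  obtain ⟨q, Q, hq⟩ := List.exists_cons_of_ne_nil (letterBlocks_ne_nil b)
  rw [hp, hq, List.cons_append, List.cons_append, List.cons.injEq] at h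
  obtain ⟨_, hap⟩ := List.exists_eq_of_ofFn_eq_append_cons (P := []) hp
  obtain ⟨hb, hbq⟩ := List.exists_eq_of_ofFn_eq_append_cons (P := []) hq
  exact (letterBlock_fst_eq_fst_zero hb (congrArg Prod.fst (hap.trans (h.1.trans hbq.symm)))).1

theorem isOverlapFree_letterBlocks : IsOverlapFree (letterBlocks (G := G) (m := m)) := by
  intro a b U V r s hUV hU hV h
  obtain ⟨p, V, rfl⟩ := List.exists_cons_of_ne_nil hV
  obtain ⟨q, Q, hq⟩ := List.exists_cons_of_ne_nil (letterBlocks_ne_nil b)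
  rw [hq, List.cons_append, List.cons_append, List.cons.injEq] at h
  obtain ⟨_, hap⟩ := List.exists_eq_of_ofFn_eq_append_cons hUV
  obtain ⟨hb, hbq⟩ := List.exists_eq_of_ofFn_eq_append_cons (P := []) hq
  exact hU <| List.length_eq_zero_iff.1
    (letterBlock_fst_eq_fst_zero hb (congrArg Prod.fst (hap.trans (h.1.trans hbq.symm)))).2

theorem snd_ne_fst_of_mem_letterBlocks {a b : GropeGen G m × Bool}
    (hab : a.1 = b.1 → a.2 = b.2)
    {x y : GropeGen G (m + 1) × GropeGen G (m + 1)} (hx : x ∈ letterBlocks a)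
    (hy : y ∈ letterBlocks b) : x.2 ≠ y.1 := by
  obtain ⟨i, rfl⟩ := List.mem_ofFn.1 hx
  obtain ⟨j, rfl⟩ := List.mem_ofFn.1 hy
  intro h
  obtain ⟨h₁, h₂⟩ := letterBlock_snd_eq_fst h
  simpa [h₂] using hab h₁

theorem flatten_map_letterExp (A : List (GropeGen G m × Bool)) :
    (A.map (letterExp G)).flatten = (A.flatMap letterBlocks).flatMap commutatorWord := by
  rw [List.flatMap_assoc, List.flatMap_def]
  congr 2
  exact funext letterExp_eq_flatMap

theorem isReduced_flatten_map_letterExp {A : List (GropeGen G m × Bool)}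
    (hA : FreeGroup.IsReduced A) : FreeGroup.IsReduced (A.map (letterExp G)).flatten := by
  rw [flatten_map_letterExp]
  refine isReduced_flatMap_commutatorWord ?_ ?_
  · simp only [List.mem_flatMap, letterBlocks, List.mem_ofFn]
    rintro _ ⟨a, -, j, rfl⟩
    exact letterBlock_fst_ne_snd a j
  · refine hA.flatMap letterBlocks_ne_nil
      (fun a b hab x hx y hy => snd_ne_fst_of_mem_letterBlocks hab hx hy) fun a => ?_
    exact (List.pairwise_of_forall_mem_list fun x hx y hy =>
      snd_ne_fst_of_mem_letterBlocks (fun _ => rfl) hx hy).isChain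

theorem exists_split_flatten_map_letterExp {A B : List (GropeGen G m × Bool)}
    {X Y : List (GropeGen G (m + 1) × Bool)} (hA : (A.map (letterExp G)).flatten = X ++ Y)
    (hB : (B.map (letterExp G)).flatten = Y ++ X) :
    ∃ A₁ A₂, A = A₁ ++ A₂ ∧ B = A₂ ++ A₁ ∧
      (A₁.map (letterExp G)).flatten = X ∧ (A₂.map (letterExp G)).flatten = Y := by
  rw [flatten_map_letterExp] at hA hB
  obtain ⟨L₁, L₂, hAL, hBL, rfl, rfl⟩ :=
    isOverlapFree_commutatorWord.exists_split_of_isPrefixCode isPrefixCode_commutatorWord hA hB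
  obtain ⟨A₁, A₂, rfl, rfl, rfl, rfl⟩ :=
    isOverlapFree_letterBlocks.exists_split_of_isPrefixCode isPrefixCode_letterBlocks hAL hBL
  exact ⟨A₁, A₂, rfl, rfl, flatten_map_letterExp A₁, flatten_map_letterExp A₂⟩

theorem gropeE_of (c : GropeGen G m) :
    gropeE G m (FreeGroup.of c) = FreeGroup.mk (letterExp G (c, true)) := by
  rw [gropeE, FreeGroup.lift_apply_of, letterExp_eq_flatMap, ← prod_map_commutatorElement,
    letterBlocks, List.map_ofFn]
  rfl

theorem gropeE_mk (w : List (GropeGen G m × Bool)) :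
    gropeE G m (FreeGroup.mk w) = FreeGroup.mk (w.map (letterExp G)).flatten := by
  have hof := gropeE_of (G := G) (m := m)
  rw [gropeE] at hof ⊢
  simp only [FreeGroup.lift_apply_of] at hof
  rw [FreeGroup.lift_mk, ← FreeGroup.prod_map_mk, List.map_map]
  congr 1
  refine List.map_congr_left fun ⟨c, b⟩ _ => ?_
  cases b
  · rw [cond_false, hof, FreeGroup.inv_mk]
    rfl
  · exact hof c

theorem wordExp_self (w : List (GropeGen G m × Bool)) : wordExp G le_rfl w = w :=
  Nat.leRecOn_self (C := fun k => List (GropeGen G k × Bool)) w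

theorem wordExp_succ {n : ℕ} (h : m ≤ n) (w : List (GropeGen G m × Bool)) :
    wordExp G (Nat.le_succ_of_le h) w = ((wordExp G h w).map (letterExp G)).flatten :=
  Nat.leRecOn_succ (C := fun k => List (GropeGen G k × Bool)) h w

theorem gropeEle_mk {n : ℕ} (h : m ≤ n) (w : List (GropeGen G m × Bool)) :
    gropeEle G h (FreeGroup.mk w) = FreeGroup.mk (wordExp G h w) := by
  induction n, h using Nat.le_induction with
  | base =>
    rw [wordExp_self]
    exact Nat.leRecOn_self (C := fun k => FreeGroup (GropeGen G k)) _
  | succ n hmn ih =>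
    rw [wordExp_succ hmn, ← gropeE_mk, ← ih]
    exact Nat.leRecOn_succ (C := fun k => FreeGroup (GropeGen G k)) hmn _

theorem isReduced_wordExp {n : ℕ} (h : m ≤ n) {w : List (GropeGen G m × Bool)}
    (hw : FreeGroup.IsReduced w) : FreeGroup.IsReduced (wordExp G h w) := by
  induction n, h using Nat.le_induction with
  | base => rwa [wordExp_self]
  | succ n hmn ih =>
    rw [wordExp_succ hmn]
    exact isReduced_flatten_map_letterExp ih

theorem exists_split_wordExp {n : ℕ} (h : m ≤ n) {A B : List (GropeGen G m × Bool)}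
    {X Y : List (GropeGen G n × Bool)} (hA : wordExp G h A = X ++ Y)
    (hB : wordExp G h B = Y ++ X) :
    ∃ A₁ A₂, A = A₁ ++ A₂ ∧ B = A₂ ++ A₁ ∧ wordExp G h A₁ = X ∧ wordExp G h A₂ = Y := by
  induction n, h using Nat.le_induction with
  | base =>
    rw [wordExp_self] at hA hB
    exact ⟨X, Y, hA, hB, wordExp_self X, wordExp_self Y⟩
  | succ n hmn ih =>
    rw [wordExp_succ hmn] at hA hB
    obtain ⟨P, Q, hP, hQ, rfl, rfl⟩ := exists_split_flatten_map_letterExp hA hB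
    obtain ⟨A₁, A₂, rfl, rfl, rfl, rfl⟩ := ih hP hQ
    exact ⟨A₁, A₂, rfl, rfl, wordExp_succ hmn A₁, wordExp_succ hmn A₂⟩

theorem wordExp_toWord_eq {n : ℕ} (h : m ≤ n) {x : FreeGroup (GropeGen G m)}
    {W : List (GropeGen G n × Bool)} (hW : IsReducedWord W)
    (hx : gropeEle G h x = FreeGroup.mk W) :
    wordExp G h x.toWord = W := by
  refine (isReduced_wordExp h FreeGroup.isReduced_toWord).eq_of_mk_eq
    (isReducedWord_iff_isReduced.1 hW) ?_
  rw [← gropeEle_mk, FreeGroup.mk_toWord, hx]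

end Grope

theorem memF_of_transform_general (G : GropeFrame) {m n : ℕ}
    (X Y : List (GropeGen G n × Bool))
    (hredXY : IsReducedWord (X ++ Y)) (hredYX : IsReducedWord (Y ++ X))
    (hmemXY : MemF G m (FreeGroup.mk (X ++ Y)))
    (hmemYX : MemF G m (FreeGroup.mk (Y ++ X))) :
    MemF G m (FreeGroup.mk X) ∧ MemF G m (FreeGroup.mk Y) := by
  obtain ⟨h, x, hx⟩ := hmemXY
  obtain ⟨_, y, hy⟩ := hmemYX
  obtain ⟨A₁, A₂, -, -, hX, hY⟩ :=
    exists_split_wordExp h (wordExp_toWord_eq h hredXY hx) (wordExp_toWord_eq h hredYX hy)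
  exact ⟨⟨h, FreeGroup.mk A₁, by rw [gropeEle_mk, hX]⟩,
    ⟨h, FreeGroup.mk A₂, by rw [gropeEle_mk, hY]⟩⟩

/-- **Lemma 7 (transform).** Let `m ≤ n` and let `XY` and `YX` be reduced words in
`𝒲(E_n)`. If `XY` and `YX` belong to `F_m`, then both `X` and `Y` belong to `F_m`. -/
theorem memF_of_transform (G : GropeFrame) {m n : ℕ} (h : m ≤ n)
    (X Y : List (GropeGen G n × Bool))
    (hredXY : IsReducedWord (X ++ Y)) (hredYX : IsReducedWord (Y ++ X))
    (hmemXY : MemF G m (FreeGroup.mk (X ++ Y)))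
    (hmemYX : MemF G m (FreeGroup.mk (Y ++ X))) :
    MemF G m (FreeGroup.mk X) ∧ MemF G m (FreeGroup.mk Y) :=
  memF_of_transform_general G X Y hredXY hredYX hmemXY hmemYX
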